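/- Let G be a group acting on a unital C*-algebra D via α, let q ∈ D be a projection with q α_g(q) = 0 for all g ≠ e, let t ∈ D be an isometry with t*qt = 1, and for a finite nonempty K ⊆ G set s = |K|^{-1/2} Σ_{g∈K} α_g(qt). Then for every h ∈ G, ‖s − α_h(s)‖² = |K Δ hK| / |K|, where K Δ hK denotes the symmetric difference of K and hK = {hg : g ∈ K}. -/

import Mathlib

/-!
The elements `v g = α_g(q t)` are orthonormal isometries, `v_g* v_{g'} = δ_{g g'}`, because
`t* q t = 1` and `q α_k(q) = 0` for `k ≠ 1`. Since `α_h` moves `v_g` to `v_{hg}`, the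
difference `s - α_h(s)` is `|K|^{-1/2}` times `R = ∑_{K ∖ hK} v - ∑_{hK ∖ K} v`, whose `R* R`
is `|K Δ hK|`, and the C*-identity `‖R‖² = ‖R* R‖` gives the norm.
-/

open Finset

section Orthonormal

variable {A ι : Type*} [Ring A] [StarRing A] [DecidableEq ι] {v : ι → A}

theorem star_sum_mul_sum_of_orthonormal
    (hv : ∀ i j, star (v i) * v j = if i = j then 1 else 0) (S T : Finset ι) :
    star (∑ i ∈ S, v i) * ∑ j ∈ T, v j = #(S ∩ T) • (1 : A) := by
  simp [star_sum, sum_mul_sum, hv, sum_ite_eq, sum_ite_mem]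

theorem star_mul_self_sum_sub_sum_of_orthonormal
    (hv : ∀ i j, star (v i) * v j = if i = j then 1 else 0) (S T : Finset ι) :
    star (∑ i ∈ S, v i - ∑ i ∈ T, v i) * (∑ i ∈ S, v i - ∑ i ∈ T, v i) =
      #(symmDiff S T) • (1 : A) := by
  have hST : Disjoint (S \ T) (T \ S) := disjoint_sdiff_sdiff
  rw [← sum_sdiff_sub_sum_sdiff, star_sub, sub_mul, mul_sub, mul_sub,
    star_sum_mul_sum_of_orthonormal hv, star_sum_mul_sum_of_orthonormal hv,
    star_sum_mul_sum_of_orthonormal hv, star_sum_mul_sum_of_orthonormal hv,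
    inter_self, inter_self, disjoint_iff_inter_eq_empty.mp hST,
    disjoint_iff_inter_eq_empty.mp hST.symm, symmDiff_def, sup_eq_union,
    card_union_of_disjoint hST, add_smul]
  simp

end Orthonormal

theorem CStarRing.sq_norm_eq_of_star_mul_self_eq_nsmul_one {A : Type*} [NormedRing A]
    [StarRing A] [CStarRing A] [Nontrivial A] [NormedAlgebra ℂ A] {x : A} {n : ℕ}
    (hx : star x * x = n • (1 : A)) : ‖x‖ ^ 2 = n := by
  rw [sq, ← CStarRing.norm_star_mul_self, hx, ← Nat.cast_smul_eq_nsmul ℂ, norm_smul,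
    norm_one, mul_one, Complex.norm_natCast]

theorem sq_norm_sum_sub_sum_of_orthonormal {A ι : Type*} [CStarAlgebra A] [Nontrivial A]
    [DecidableEq ι] {v : ι → A} (hv : ∀ i j, star (v i) * v j = if i = j then 1 else 0)
    (S T : Finset ι) :
    ‖∑ i ∈ S, v i - ∑ i ∈ T, v i‖ ^ 2 = #(symmDiff S T) :=
  CStarRing.sq_norm_eq_of_star_mul_self_eq_nsmul_one
    (star_mul_self_sum_sub_sum_of_orthonormal hv S T)

section Orbit

variable {R A G : Type*} [CommSemiring R] [Ring A] [StarRing A] [Algebra R A] [Group G]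
  {α : G → A ≃⋆ₐ[R] A} (hα_mul : ∀ g h : G, ∀ a : A, α (g * h) a = α g (α h a))

include hα_mul

theorem star_apply_mul_apply (x : A) (g g' : G) :
    star (α g x) * α g' x = α g (star x * α (g⁻¹ * g') x) := by
  rw [map_mul, map_star, ← hα_mul, mul_inv_cancel_left]

theorem map_sum_apply_eq_sum_image [DecidableEq G] (x : A) (h : G) (K : Finset G) :
    α h (∑ g ∈ K, α g x) = ∑ g ∈ K.image (h * ·), α g x := by
  rw [map_sum, sum_image fun _ _ _ _ ↦ mul_left_cancel]
  exact sum_congr rfl fun g _ ↦ (hα_mul h g x).symm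

theorem star_apply_mul_apply_eq_ite [DecidableEq G] (hα_one : ∀ a : A, α 1 a = a) {q t : A}
    (hq_sa : IsSelfAdjoint q) (hq_idem : q * q = q)
    (hq_orth : ∀ g : G, g ≠ 1 → q * α g q = 0) (htqt : star t * q * t = 1) (g g' : G) :
    star (α g (q * t)) * α g' (q * t) = if g = g' then 1 else 0 := by
  rw [star_apply_mul_apply hα_mul]
  split_ifs with hgg
  · subst hgg
    rw [inv_mul_cancel, hα_one, star_mul, hq_sa.star_eq, mul_assoc, ← mul_assoc q, hq_idem,
      ← mul_assoc, htqt, map_one]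
  · have hk : g⁻¹ * g' ≠ 1 := fun hk ↦ hgg (inv_mul_eq_one.mp hk)
    rw [star_mul, hq_sa.star_eq, map_mul (α (g⁻¹ * g')), mul_assoc, ← mul_assoc q,
      hq_orth _ hk, zero_mul, mul_zero, map_zero]

end Orbit

theorem stmt9_general {D : Type*} [CStarAlgebra D] [Nontrivial D] {G : Type*} [Group G]
    [DecidableEq G]
    (α : G → D ≃⋆ₐ[ℂ] D)
    (hα_mul : ∀ g h : G, ∀ a : D, α (g * h) a = α g (α h a))
    (hα_one : ∀ a : D, α 1 a = a)
    (q : D) (hq_sa : IsSelfAdjoint q) (hq_idem : q * q = q)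
    (hq_orth : ∀ g : G, g ≠ 1 → q * α g q = 0)
    (t : D) (htqt : star t * q * t = 1)
    (K : Finset G) (h : G) :
    ‖(((Real.sqrt K.card : ℂ))⁻¹ • ∑ g ∈ K, α g (q * t)) -
        α h (((Real.sqrt K.card : ℂ))⁻¹ • ∑ g ∈ K, α g (q * t))‖ ^ 2 =
      ((symmDiff K (K.image (fun g => h * g))).card : ℝ) / K.card := by
  have hv := star_apply_mul_apply_eq_ite hα_mul hα_one hq_sa hq_idem hq_orth htqt
  rw [map_smul, map_sum_apply_eq_sum_image hα_mul, ← smul_sub, norm_smul, mul_pow,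
    sq_norm_sum_sub_sum_of_orthonormal hv, norm_inv, Complex.norm_real, Real.norm_eq_abs,
    abs_of_nonneg (Real.sqrt_nonneg _), inv_pow, Real.sq_sqrt (Nat.cast_nonneg _),
    inv_mul_eq_div]

/-- In the Følner averaging construction, with
`s = |K|^{-1/2} Σ_{g∈K} α_g(q t)`, one has `‖s − α_h(s)‖² = |K Δ hK| / |K|` for every
`h ∈ G`, where `hK = {h·g : g ∈ K}`. -/
theorem stmt9 {D : Type*} [CStarAlgebra D] [Nontrivial D] {G : Type*} [Group G]
    [DecidableEq G]
    (α : G → D ≃⋆ₐ[ℂ] D)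
    (hα_mul : ∀ g h : G, ∀ a : D, α (g * h) a = α g (α h a))
    (hα_one : ∀ a : D, α 1 a = a)
    (q : D) (hq_sa : IsSelfAdjoint q) (hq_idem : q * q = q)
    (hq_orth : ∀ g : G, g ≠ 1 → q * α g q = 0)
    (t : D) (ht_isom : star t * t = 1) (htqt : star t * q * t = 1)
    (K : Finset G) (hK : K.Nonempty) (h : G) :
    ‖(((Real.sqrt K.card : ℂ))⁻¹ • ∑ g ∈ K, α g (q * t)) -
        α h (((Real.sqrt K.card : ℂ))⁻¹ • ∑ g ∈ K, α g (q * t))‖ ^ 2 =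
      ((symmDiff K (K.image (fun g => h * g))).card : ℝ) / K.card :=
  stmt9_general α hα_mul hα_one q hq_sa hq_idem hq_orth t htqt K h
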